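/- Let X be a locally compact space and K ⊆ X quasi-compact. Then the set L = {S ∈ HX : S ∩ K ≠ ∅} is compact in HX. Consequently HX is locally compact, and ĤX = HX ∪ {∅} is the one-point compactification of HX; moreover HX is σ-compact whenever X is σ-compact. -/

import Mathlib

open Set Topology

/-- A space is locally compact in the sense of the paper if every point has a
compact (quasi-compact and Hausdorff) neighborhood. -/
def LocCompact (X : Type*) [TopologicalSpace X] : Prop :=
  ∀ x : X, ∃ K : Set X, K ∈ nhds x ∧ IsCompact K ∧ T2Space K

/-- The finite-intersection condition defining membership in `HX`. -/
def HXcond {X : Type*} [TopologicalSpace X] (S : Set X) : Prop :=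
  ∀ I : Finset (Set X), (∀ V ∈ I, IsOpen V ∧ (S ∩ V).Nonempty) →
    (⋂₀ (I : Set (Set X))).Nonempty

/-- The space `HX` of nonempty subsets of `X` satisfying the finite-intersection
condition. -/
def HXsp (X : Type*) [TopologicalSpace X] : Type _ :=
  {S : Set X // S.Nonempty ∧ HXcond S}

/-- The space `ĤX = HX ∪ {∅}`. -/
def hatHX (X : Type*) [TopologicalSpace X] : Type _ :=
  {S : Set X // S = ∅ ∨ (S.Nonempty ∧ HXcond S)}

/-- The topology on `HX` generated by `Ω_V` (`V` open) and `Ω^Q` (`Q` quasi-compact). -/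
instance (X : Type*) [TopologicalSpace X] : TopologicalSpace (HXsp X) :=
  TopologicalSpace.generateFrom
    ({A | ∃ V : Set X, IsOpen V ∧ A = {S : HXsp X | (S.1 ∩ V).Nonempty}} ∪
     {A | ∃ Q : Set X, IsCompact Q ∧ A = {S : HXsp X | S.1 ∩ Q = ∅}})

/-- The analogous topology on `ĤX`. -/
instance (X : Type*) [TopologicalSpace X] : TopologicalSpace (hatHX X) :=
  TopologicalSpace.generateFrom
    ({A | ∃ V : Set X, IsOpen V ∧ A = {S : hatHX X | (S.1 ∩ V).Nonempty}} ∪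
     {A | ∃ Q : Set X, IsCompact Q ∧ A = {S : hatHX X | S.1 ∩ Q = ∅}})

/-! Given an ultrafilter `F` on a family of subsets of `X`, collect the points all of whose
open neighbourhoods are hit along `F`. Missing a compact set is a local condition, so by
compactness `F` eventually misses every compact set disjoint from this limit set, and `F`
converges to the limit set once it belongs to the family. The finite-intersection condition
passes to the limit, so `ĤX` is compact and the sets `{S | S ∩ K ≠ ∅}` are compact in `HX`.
For Hausdorffness, members of `HX` are closed in a locally compact `X`, and a point `x ∈ S \ T`
has a compact neighbourhood `Q` missing `T`: `Ω_(int Q)` and `Ω^Q` separate `S` from `T`. Being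
an open embedding into the compact Hausdorff space `ĤX` with complement `{∅}`, `HX → ĤX`
identifies `ĤX` with the one-point compactification. -/

open Filter TopologicalSpace

section HitMiss

variable {X α : Type*} [TopologicalSpace X] (p : α → Set X)

def hitMissSubbasis : Set (Set α) :=
  {A | ∃ V : Set X, IsOpen V ∧ A = {S | (p S ∩ V).Nonempty}} ∪
    {A | ∃ Q : Set X, IsCompact Q ∧ A = {S | p S ∩ Q = ∅}}

lemma hitMissSubbasis_comp {β : Type*} (f : β → α) :
    hitMissSubbasis (p ∘ f) = preimage f '' hitMissSubbasis p := by
  ext A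
  constructor
  · rintro (⟨V, hV, rfl⟩ | ⟨Q, hQ, rfl⟩)
    exacts [⟨_, Or.inl ⟨V, hV, rfl⟩, rfl⟩, ⟨_, Or.inr ⟨Q, hQ, rfl⟩, rfl⟩]
  · rintro ⟨B, ⟨V, hV, rfl⟩ | ⟨Q, hQ, rfl⟩, rfl⟩
    exacts [Or.inl ⟨V, hV, rfl⟩, Or.inr ⟨Q, hQ, rfl⟩]

/-- The lower Kuratowski limit of `p` along `F`. -/
def hitLimit (F : Ultrafilter α) : Set X :=
  {x | ∀ V : Set X, IsOpen V → x ∈ V → {S | (p S ∩ V).Nonempty} ∈ F}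

variable {p} {F : Ultrafilter α}

lemma miss_mem_of_hitLimit_inter_eq_empty {Q : Set X} (hQ : IsCompact Q)
    (h : hitLimit p F ∩ Q = ∅) : {S | p S ∩ Q = ∅} ∈ F := by
  refine hQ.induction_on (p := fun s => {S | p S ∩ s = ∅} ∈ F)
    (univ_mem' fun S => inter_empty (p S))
    (fun s t hst ht => mem_of_superset ht fun S hS =>
      subset_eq_empty (inter_subset_inter_right _ hst) hS)
    (fun s t hs ht => by filter_upwards [hs, ht] with S hSs hSt; simp [inter_union_distrib_left, *])
    fun x hx => ?_
  have hxL : x ∉ hitLimit p F := fun hxL => (h.subset ⟨hxL, hx⟩).elim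
  simp only [hitLimit, mem_ofPred_eq, not_forall] at hxL
  obtain ⟨V, hV, hxV, hVF⟩ := hxL
  refine ⟨V, mem_nhdsWithin_of_mem_nhds (hV.mem_nhds hxV), ?_⟩
  simpa only [compl_ofPred, not_nonempty_iff_eq_empty] using Ultrafilter.compl_mem_iff_notMem.2 hVF

lemma hitLimit_inter_nonempty {Q : Set X} (hQ : IsCompact Q)
    (hF : {S | (p S ∩ Q).Nonempty} ∈ F) : (hitLimit p F ∩ Q).Nonempty := by
  by_contra h
  obtain ⟨S, hhit, hmiss⟩ := Ultrafilter.nonempty_of_mem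
    (inter_mem hF (miss_mem_of_hitLimit_inter_eq_empty hQ (not_nonempty_iff_eq_empty.1 h)))
  exact hhit.ne_empty hmiss

lemma hxcond_hitLimit (hp : ∀ S, (p S).Nonempty → HXcond (p S))
    (hne : (hitLimit p F).Nonempty) : HXcond (hitLimit p F) := by
  intro I hI
  have hhit : (⋂ V ∈ I, {S | (p S ∩ V).Nonempty}) ∈ F :=
    (biInter_finset_mem I).2 fun V hV =>
      let ⟨hV, _, hxL, hxV⟩ := hI V hV
      hxL V hV hxV
  obtain ⟨S, hS⟩ := Ultrafilter.nonempty_of_mem hhit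
  rw [mem_iInter₂] at hS
  rcases I.eq_empty_or_nonempty with rfl | ⟨V₀, hV₀⟩
  · exact ⟨hne.some, by simp⟩
  · exact hp S ((hS V₀ hV₀).mono inter_subset_left) I fun V hV => ⟨(hI V hV).1, hS V hV⟩

variable [t : TopologicalSpace α]

lemma le_nhds_of_eq_hitLimit (ht : t = generateFrom (hitMissSubbasis p)) {a : α}
    (ha : p a = hitLimit p F) : ↑F ≤ 𝓝 a := by
  subst ht
  rw [nhds_generateFrom]
  refine le_iInf₂ fun s ⟨has, hs⟩ => le_principal_iff.2 ?_
  rcases hs with ⟨V, hV, rfl⟩ | ⟨Q, hQ, rfl⟩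
  · obtain ⟨x, hxa, hxV⟩ := has
    exact (ha ▸ hxa) V hV hxV
  · exact miss_mem_of_hitLimit_inter_eq_empty hQ (ha ▸ has)

lemma isCompact_setOf_inter_nonempty_of_hitMiss (ht : t = generateFrom (hitMissSubbasis p))
    (hlim : ∀ F : Ultrafilter α, (hitLimit p F).Nonempty → hitLimit p F ∈ range p)
    {K : Set X} (hK : IsCompact K) : IsCompact {S | (p S ∩ K).Nonempty} := by
  refine isCompact_iff_ultrafilter_le_nhds.2 fun F hF => ?_
  obtain ⟨x, hxL, hxK⟩ := hitLimit_inter_nonempty hK (le_principal_iff.1 hF)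
  obtain ⟨a, ha⟩ := hlim F ⟨x, hxL⟩
  exact ⟨a, ⟨x, ha ▸ hxL, hxK⟩, le_nhds_of_eq_hitLimit ht ha⟩

lemma compactSpace_of_hitMiss (ht : t = generateFrom (hitMissSubbasis p))
    (hlim : ∀ F : Ultrafilter α, hitLimit p F ∈ range p) : CompactSpace α :=
  ⟨isCompact_iff_ultrafilter_le_nhds.2 fun F _ =>
    let ⟨a, ha⟩ := hlim F
    ⟨a, mem_univ a, le_nhds_of_eq_hitLimit ht ha⟩⟩

end HitMiss

section LocCompact

variable {X : Type*} [TopologicalSpace X]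

lemma disjoint_nhds_nhds_of_mem_nhds {K : Set X} [T2Space K] {x y : X} (hx : K ∈ 𝓝 x)
    (hy : K ∈ 𝓝 y) (hxy : x ≠ y) : Disjoint (𝓝 x) (𝓝 y) := by
  have hxy' : (⟨x, mem_of_mem_nhds hx⟩ : K) ≠ ⟨y, mem_of_mem_nhds hy⟩ :=
    fun h => hxy (congrArg Subtype.val h)
  have := (disjoint_map Subtype.val_injective).2 (disjoint_nhds_nhds.2 hxy')
  rwa [map_nhds_subtype_val, map_nhds_subtype_val, nhdsWithin_eq_nhds.2 hx,
    nhdsWithin_eq_nhds.2 hy] at this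

lemma LocCompact.exists_isCompact_mem_nhds_subset (hX : LocCompact X) {x : X} {U : Set X}
    (hU : U ∈ 𝓝 x) : ∃ Q, IsCompact Q ∧ Q ∈ 𝓝 x ∧ Q ⊆ U := by
  obtain ⟨K, hK, hKc, _⟩ := hX x
  have : CompactSpace K := isCompact_iff_compactSpace.1 hKc
  let x' : K := ⟨x, mem_of_mem_nhds hK⟩
  have hU' : Subtype.val ⁻¹' U ∈ 𝓝 x' :=
    continuous_subtype_val.continuousAt.preimage_mem_nhds hU
  obtain ⟨s, hs, hsU, hsc⟩ := local_compact_nhds hU'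
  refine ⟨Subtype.val '' s, hsc.image continuous_subtype_val, ?_, image_subset_iff.2 hsU⟩
  have := image_mem_map (m := Subtype.val) hs
  rwa [map_nhds_subtype_val, nhdsWithin_eq_nhds.2 hK] at this

lemma HXcond.inter_nonempty {S U V : Set X} (h : HXcond S) (hU : IsOpen U) (hV : IsOpen V)
    (hSU : (S ∩ U).Nonempty) (hSV : (S ∩ V).Nonempty) : (U ∩ V).Nonempty := by
  classical
  simpa using h {U, V} (by simp [*, or_imp, forall_and])

lemma HXcond.isClosed (hX : LocCompact X) {S : Set X} (h : HXcond S) : IsClosed S := by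
  refine closure_subset_iff_isClosed.1 fun x hx => by_contra fun hxS => ?_
  obtain ⟨K, hK, -, _⟩ := hX x
  obtain ⟨y, hyK, hyS⟩ :=
    mem_closure_iff.1 hx _ isOpen_interior (mem_interior_iff_mem_nhds.2 hK)
  have hxy : Disjoint (𝓝 x) (𝓝 y) := disjoint_nhds_nhds_of_mem_nhds hK
    (mem_interior_iff_mem_nhds.1 hyK) (ne_of_mem_of_not_mem hyS hxS).symm
  obtain ⟨U, ⟨hxU, hU⟩, V, ⟨hyV, hV⟩, hUV⟩ :=
    ((nhds_basis_opens x).disjoint_iff (nhds_basis_opens y)).1 hxy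
  obtain ⟨z, hzU, hzV⟩ := h.inter_nonempty hU hV
    ((mem_closure_iff.1 hx U hU hxU).mono fun z hz => ⟨hz.2, hz.1⟩) ⟨y, hyS, hyV⟩
  exact disjoint_left.1 hUV hzU hzV

end LocCompact

section Separation

variable {X α : Type*} [TopologicalSpace X] {p : α → Set X} [t : TopologicalSpace α]

lemma exists_isOpen_disjoint_of_mem_of_notMem (hX : LocCompact X)
    (ht : t = generateFrom (hitMissSubbasis p)) {a b : α} {x : X} (hxa : x ∈ p a)
    (hb : IsClosed (p b)) (hxb : x ∉ p b) :
    ∃ u v : Set α, IsOpen u ∧ IsOpen v ∧ a ∈ u ∧ b ∈ v ∧ Disjoint u v := by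
  subst ht
  obtain ⟨Q, hQc, hQx, hQb⟩ :=
    hX.exists_isCompact_mem_nhds_subset (hb.isOpen_compl.mem_nhds hxb)
  refine ⟨{S | (p S ∩ interior Q).Nonempty}, {S | p S ∩ Q = ∅},
    isOpen_generateFrom_of_mem (Or.inl ⟨_, isOpen_interior, rfl⟩),
    isOpen_generateFrom_of_mem (Or.inr ⟨_, hQc, rfl⟩),
    ⟨x, hxa, mem_interior_iff_mem_nhds.2 hQx⟩, ?_, ?_⟩
  · exact eq_empty_of_forall_notMem fun y hy => hQb hy.2 hy.1
  · refine disjoint_left.2 fun S ⟨y, hyS, hyQ⟩ hS => ?_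
    exact (eq_empty_iff_forall_notMem.1 hS) y ⟨hyS, interior_subset hyQ⟩

lemma t2Space_of_hitMiss (hX : LocCompact X) (ht : t = generateFrom (hitMissSubbasis p))
    (hp : Function.Injective p) (hcl : ∀ a, IsClosed (p a)) : T2Space α := by
  refine ⟨fun a b hab => ?_⟩
  obtain ⟨x, hx⟩ : ∃ x, ¬(x ∈ p a ↔ x ∈ p b) := by
    by_contra! h
    exact hab (hp (Set.ext h))
  by_cases hxa : x ∈ p a
  · exact exists_isOpen_disjoint_of_mem_of_notMem hX ht hxa (hcl b) (by tauto)
  · obtain ⟨u, v, hu, hv, hbu, hav, huv⟩ :=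
      exists_isOpen_disjoint_of_mem_of_notMem hX ht (show x ∈ p b by tauto) (hcl a) hxa
    exact ⟨v, u, hv, hu, hav, hbu, huv.symm⟩

end Separation

namespace HXsp

variable {X : Type*} [TopologicalSpace X]

def toHatHX (S : HXsp X) : hatHX X := ⟨S.1, Or.inr S.2⟩

lemma isCompact_setOf_inter_nonempty {K : Set X} (hK : IsCompact K) :
    IsCompact {S : HXsp X | (S.1 ∩ K).Nonempty} :=
  isCompact_setOf_inter_nonempty_of_hitMiss rfl
    (fun _ hne => ⟨⟨_, hne, hxcond_hitLimit (fun S _ => S.2.2) hne⟩, rfl⟩) hK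

lemma t2Space (hX : LocCompact X) : T2Space (HXsp X) :=
  t2Space_of_hitMiss hX rfl Subtype.val_injective fun S => S.2.2.isClosed hX

lemma locCompact (hX : LocCompact X) : LocCompact (HXsp X) := by
  have := t2Space hX
  intro S
  obtain ⟨x, hxS⟩ := S.2.1
  obtain ⟨K, hK, hKc, -⟩ := hX x
  have hopen : IsOpen {T : HXsp X | (T.1 ∩ interior K).Nonempty} :=
    isOpen_generateFrom_of_mem (Or.inl ⟨_, isOpen_interior, rfl⟩)
  have hS : S ∈ {T : HXsp X | (T.1 ∩ interior K).Nonempty} :=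
    ⟨x, hxS, mem_interior_iff_mem_nhds.2 hK⟩
  refine ⟨_, mem_of_superset (hopen.mem_nhds hS) ?_, isCompact_setOf_inter_nonempty hKc,
    inferInstance⟩
  exact fun T hT => hT.mono (inter_subset_inter_right _ interior_subset)

lemma isEmbedding_toHatHX : IsEmbedding (toHatHX (X := X)) := by
  refine ⟨⟨?_⟩, fun _ _ h => Subtype.ext (congrArg (Subtype.val : hatHX X → Set X) h)⟩
  exact (induced_generateFrom_eq.trans (congrArg generateFrom
    (hitMissSubbasis_comp (Subtype.val : hatHX X → Set X) toHatHX).symm)).symm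

lemma range_toHatHX : range (toHatHX (X := X)) = {⟨∅, Or.inl rfl⟩}ᶜ := by
  ext T
  refine ⟨?_, fun hT => ?_⟩
  · rintro ⟨S, rfl⟩ h
    exact S.2.1.ne_empty (congrArg Subtype.val h)
  · have hne : T.1.Nonempty := nonempty_iff_ne_empty.2 fun h => hT (Subtype.ext h)
    exact ⟨⟨T.1, hne, (T.2.resolve_left hne.ne_empty).2⟩, rfl⟩

end HXsp

namespace hatHX

variable {X : Type*} [TopologicalSpace X]

instance : CompactSpace (hatHX X) :=
  compactSpace_of_hitMiss rfl fun F => (eq_empty_or_nonempty (hitLimit Subtype.val F)).elim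
    (fun h => ⟨⟨_, Or.inl h⟩, rfl⟩)
    fun hne => ⟨⟨_, Or.inr ⟨hne, hxcond_hitLimit
      (fun (S : hatHX X) hS => (S.2.resolve_left hS.ne_empty).2) hne⟩⟩, rfl⟩

lemma t2Space (hX : LocCompact X) : T2Space (hatHX X) :=
  t2Space_of_hitMiss hX rfl Subtype.val_injective fun S =>
    S.2.elim (fun h => by rw [h]; exact isClosed_empty) fun h => h.2.isClosed hX

end hatHX

/-- For `X` locally compact: the set of `S ∈ HX` meeting a given quasi-compact set
is compact; `HX` is locally compact; `ĤX` is the one-point compactification of `HX`;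
and `HX` is σ-compact whenever `X` is. -/
theorem stmt16 {X : Type*} [TopologicalSpace X] (hX : LocCompact X) :
    (∀ K : Set X, IsCompact K → IsCompact {S : HXsp X | (S.1 ∩ K).Nonempty}) ∧
    LocCompact (HXsp X) ∧
    (∃ φ : hatHX X ≃ₜ OnePoint (HXsp X),
      ∀ S : HXsp X, φ ⟨S.1, Or.inr S.2⟩ = OnePoint.some S) ∧
    ((∃ K : ℕ → Set X, (∀ n, IsCompact (K n)) ∧ ⋃ n, K n = univ) →
      ∃ K : ℕ → Set (HXsp X), (∀ n, IsCompact (K n)) ∧ ⋃ n, K n = univ) := by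
  have := hatHX.t2Space hX
  refine ⟨fun K hK => HXsp.isCompact_setOf_inter_nonempty hK, HXsp.locCompact hX, ?_, ?_⟩
  · let e := OnePoint.equivOfIsEmbeddingOfRangeEq (Y := hatHX X) _ _
      HXsp.isEmbedding_toHatHX HXsp.range_toHatHX
    exact ⟨e.symm, fun S => e.symm_apply_eq.2 rfl⟩
  · rintro ⟨K, hK, hKX⟩
    refine ⟨_, fun n => HXsp.isCompact_setOf_inter_nonempty (hK n),
      eq_univ_of_forall fun S => ?_⟩
    obtain ⟨x, hxS⟩ := S.2.1
    obtain ⟨n, hxn⟩ := mem_iUnion.1 (hKX.symm ▸ mem_univ x)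
    exact mem_iUnion.2 ⟨n, x, hxS, hxn⟩
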